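/- arXiv:0808.2522 — 2 statements merged into one kernel-verified Lean document; each statement's English description precedes it below -/
import Mathlib

section
/- If Y is an irreducible algebraic set over an L-algebra B, then the coordinate algebra Γ(Y) = T_L(X)/θ_{Rad(Y)} is discriminated by B: for any finitely many elements t₁/θ, s₁/θ, ..., t_m/θ, s_m/θ of Γ(Y) with t_i/θ ≠ s_i/θ for all i, there exists a homomorphism h : Γ(Y) → B with h(t_i/θ) ≠ h(s_i/θ) for all i. -/
open FirstOrder Language Structure

universe u v

namespace UAG

variable {L : FirstOrder.Language}

/-- The algebraic set `V_M(S)` defined in `M` by a system `S` of equations in `n` variables. -/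
def solSet (M : Type u) [L.Structure M] {n : ℕ}
    (S : Set (L.Term (Fin n) × L.Term (Fin n))) : Set (Fin n → M) :=
  {x | ∀ p ∈ S, p.1.realize x = p.2.realize x}

/-- The radical `Rad_M(S)`: the set of atomic formulas holding at every point of `V_M(S)`. -/
def radRel (M : Type u) [L.Structure M] {n : ℕ}
    (S : Set (L.Term (Fin n) × L.Term (Fin n))) : Set (L.Term (Fin n) × L.Term (Fin n)) :=
  {p | ∀ x ∈ solSet M S, p.1.realize x = p.2.realize x}

/-- The setoid on terms induced by the radical congruence `Rad_M(S)`. -/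
def radSetoid (M : Type u) [L.Structure M] {n : ℕ}
    (S : Set (L.Term (Fin n) × L.Term (Fin n))) : Setoid (L.Term (Fin n)) :=
  ⟨fun t₁ t₂ => (t₁, t₂) ∈ radRel M S,
    ⟨fun _ _ _ => rfl, fun h x hx => (h x hx).symm,
     fun h h' x hx => (h x hx).trans (h' x hx)⟩⟩

/-- The coordinate algebra `Γ(V_M(S)) = T_L(X)/θ_{Rad_M(S)}` of the algebraic set `V_M(S)`. -/
noncomputable def coordStructure (M : Type u) [L.Structure M] {n : ℕ}
    (S : Set (L.Term (Fin n) × L.Term (Fin n))) :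
    L.Structure (Quotient (radSetoid M S)) where
  funMap {k} f x := Quotient.mk (radSetoid M S) (Term.func f fun i => (x i).out)
  RelMap {k} _ _ := False

/-- A subset of `Bⁿ` is algebraic if it is the solution set of a system of equations. -/
def IsAlgebraicSet (B : Type u) [L.Structure B] {n : ℕ} (Y : Set (Fin n → B)) : Prop :=
  ∃ S : Set (L.Term (Fin n) × L.Term (Fin n)), Y = solSet B S

/-- An algebraic set is irreducible if it is not a finite union of proper algebraic subsets. -/
def IsIrreducibleAlgSet (B : Type u) [L.Structure B] {n : ℕ} (Y : Set (Fin n → B)) : Prop :=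
  IsAlgebraicSet (L := L) B Y ∧
    ∀ s : Finset (Set (Fin n → B)),
      (∀ Z ∈ s, IsAlgebraicSet (L := L) B Z ∧ Z ⊂ Y) → Y ≠ ⋃₀ ↑s

/-- If `Y = V_B(S)` is an irreducible algebraic set over the `L`-algebra `B`,
then its coordinate algebra `Γ(Y) = T_L(X)/θ_{Rad(Y)}` is discriminated by `B`: for finitely many
pairs of distinct elements of `Γ(Y)` there is a homomorphism `Γ(Y) → B` separating all of them
simultaneously. -/
theorem coordinate_algebra_of_irreducible_discriminated [∀ k, IsEmpty (L.Relations k)]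
    (B : Type u) [L.Structure B] (n : ℕ)
    (S : Set (L.Term (Fin n) × L.Term (Fin n)))
    (hirr : IsIrreducibleAlgSet (L := L) B (solSet B S)) :
    ∀ (m : ℕ) (t s : Fin m → L.Term (Fin n)),
      (∀ i, Quotient.mk (radSetoid B S) (t i) ≠ Quotient.mk (radSetoid B S) (s i)) →
      ∃ h : @FirstOrder.Language.Hom L (Quotient (radSetoid B S)) B (coordStructure B S) _,
        ∀ i, h (Quotient.mk (radSetoid B S) (t i)) ≠ h (Quotient.mk (radSetoid B S) (s i)) := by

  classical
  intro m t s hts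
  obtain ⟨hY, hirr2⟩ := hirr
  have hZsub : ∀ i : Fin m, solSet B (S ∪ {(t i, s i)}) ⊆ solSet B S := by
    intro i x hx p hp; exact hx p (Or.inl hp)
  have hZne : ∀ i, solSet B (S ∪ {(t i, s i)}) ≠ solSet B S := by
    intro i heq
    apply hts i
    apply Quotient.sound
    intro x hx
    have hx' : x ∈ solSet B (S ∪ {(t i, s i)}) := heq ▸ hx
    exact hx' (t i, s i) (Or.inr rfl)
  set F : Finset (Set (Fin n → B)) :=
    Finset.image (fun i => solSet B (S ∪ {(t i, s i)})) Finset.univ with hF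
  have hne : solSet B S ≠ ⋃₀ ↑F := by
    apply hirr2 F
    intro Z hZ
    simp only [hF, Finset.mem_image] at hZ
    obtain ⟨i, -, rfl⟩ := hZ
    exact ⟨⟨_, rfl⟩, ⟨hZsub i, fun h => hZne i (Set.Subset.antisymm (hZsub i) h)⟩⟩
  have hsub : ⋃₀ ↑F ⊆ solSet B S := by
    intro x hx
    obtain ⟨Z, hZ, hxZ⟩ := hx
    simp only [hF, Finset.coe_image, Set.mem_image] at hZ
    obtain ⟨i, -, rfl⟩ := hZ
    exact hZsub i hxZ
  obtain ⟨x, hxY, hxF⟩ : ∃ x, x ∈ solSet B S ∧ x ∉ ⋃₀ ↑F := by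
    by_contra h
    push_neg at h
    exact hne (Set.Subset.antisymm h hsub)
  have hsep : ∀ i, (t i).realize x ≠ (s i).realize x := by
    intro i heq
    apply hxF
    refine ⟨solSet B (S ∪ {(t i, s i)}), ?_, ?_⟩
    · simp [hF]
    · intro p hp
      rcases hp with hp | hp
      · exact hxY p hp
      · cases hp; exact heq
  letI : L.Structure (Quotient (radSetoid B S)) := coordStructure B S
  refine ⟨{ toFun := Quotient.lift (fun u : L.Term (Fin n) => u.realize x)
              (fun a b hab => hab x hxY),
            map_fun' := ?_, map_rel' := ?_ }, ?_⟩
  · intro k f y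
    change Term.realize x (Term.func f fun i => (y i).out) = funMap f _
    rw [Term.realize]
    congr 1
    funext i
    simp only [Function.comp_apply]
    conv_rhs => rw [← Quotient.out_eq (y i)]
    rfl
  · intro k r
    exact isEmptyElim r
  · intro i
    exact hsep i


end UAG
end

section
/- Let B be an L-algebra and C a finitely generated L-algebra. Then C is the coordinate algebra of some irreducible algebraic set over B if and only if C is discriminated by B. -/
open FirstOrder Language Structure

universe u v

namespace UAG

variable {L : FirstOrder.Language}

section Aux

variable {B : Type u} [L.Structure B] {n : ℕ} {S : Set (L.Term (Fin n) × L.Term (Fin n))}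

lemma out_realize {x : Fin n → B} (hx : x ∈ solSet B S) (t : L.Term (Fin n)) :
    (Quotient.mk (radSetoid B S) t).out.realize x = t.realize x :=
  (Quotient.mk_out (s := radSetoid B S) t) x hx

/-- Evaluation at a point of the algebraic set gives a hom from the coordinate algebra. -/
noncomputable def evalHom [∀ k, IsEmpty (L.Relations k)] {x : Fin n → B}
    (hx : x ∈ solSet B S) :
    @FirstOrder.Language.Hom L (Quotient (radSetoid B S)) B (coordStructure B S) _ :=
  letI := coordStructure B S
  { toFun := fun q => q.out.realize x
    map_fun' := by
      intro k f v
      show (Quotient.mk (radSetoid B S) (Term.func f fun i => (v i).out)).out.realize x = _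
      rw [out_realize hx]
      simp only [Term.realize]
      rfl
    map_rel' := fun r _ => isEmptyElim r }

lemma evalHom_apply [∀ k, IsEmpty (L.Relations k)] {x : Fin n → B}
    (hx : x ∈ solSet B S) (q : Quotient (radSetoid B S)) :
    evalHom hx q = q.out.realize x := rfl

lemma solSet_antitone {S' : Set (L.Term (Fin n) × L.Term (Fin n))} (h : S ⊆ S') :
    solSet B S' ⊆ solSet B S :=
  fun _ hx p hp => hx p (h hp)

end Aux

/-- Let `B` be an `L`-algebra and `C` a finitely generated `L`-algebra.  Then
`C` is the coordinate algebra of some irreducible algebraic set over `B` if and only if `C` is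
discriminated by `B` (for every finite subset `W ⊆ C` there is a homomorphism `C → B` injective
on `W`). -/

theorem coordinate_algebra_of_irreducible_iff_discriminated [∀ k, IsEmpty (L.Relations k)]
    (B : Type u) [L.Structure B] (C : Type u) [L.Structure C]
    (hfg : Structure.FG L C) :
    (∃ (n : ℕ) (S : Set (L.Term (Fin n) × L.Term (Fin n))),
      IsIrreducibleAlgSet (L := L) B (solSet B S) ∧
        Nonempty (@FirstOrder.Language.Equiv L C (Quotient (radSetoid B S)) _
          (coordStructure B S))) ↔
    (∀ W : Finset C, ∃ h : C →[L] B, Set.InjOn h ↑W) := by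
  classical
  constructor
  · rintro ⟨n, S, ⟨⟨-, hirr⟩, ⟨e⟩⟩⟩ W
    letI := coordStructure B S
    -- find a point of the algebraic set separating the (images of the) elements of `W`
    obtain ⟨x, hx, hsep⟩ : ∃ x ∈ solSet B S, ∀ a ∈ W, ∀ b ∈ W, e a ≠ e b →
        (e a).out.realize x ≠ (e b).out.realize x := by
      by_contra hcon
      push_neg at hcon
      set P : Finset (C × C) := (W ×ˢ W).filter (fun p => e p.1 ≠ e p.2) with hP
      set s : Finset (Set (Fin n → B)) :=
        P.image (fun p => solSet B (S ∪ {((e p.1).out, (e p.2).out)})) with hs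
      refine hirr s ?_ ?_
      · intro Z hZ
        simp only [hs, Finset.mem_image] at hZ
        obtain ⟨p, hp, rfl⟩ := hZ
        simp only [hP, Finset.mem_filter] at hp
        refine ⟨⟨_, rfl⟩, ?_⟩
        constructor
        · exact solSet_antitone Set.subset_union_left
        · intro hsub
          have hne : ((e p.1).out, (e p.2).out) ∉ radRel B S := by
            intro hmem
            exact hp.2 (Quotient.out_equiv_out.1 hmem)
          obtain ⟨y, hy, hne'⟩ := by
            simpa only [radRel, Set.mem_setOf_eq, not_forall, exists_prop] using hne
          exact hne' (hsub hy ((e p.1).out, (e p.2).out) (Or.inr rfl))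
      · -- `solSet B S = ⋃₀ s`
        apply Set.Subset.antisymm
        · intro x hx
          obtain ⟨a, ha, b, hb, hab, heq⟩ := hcon x hx
          refine Set.mem_sUnion.2 ⟨solSet B (S ∪ {((e a).out, (e b).out)}), ?_, ?_⟩
          · simp only [hs, Finset.coe_image, Set.mem_image]
            refine ⟨(a, b), ?_, rfl⟩
            exact Finset.mem_filter.2 ⟨Finset.mem_product.2 ⟨ha, hb⟩, hab⟩
          · intro p hp
            rcases hp with hp | hp
            · exact hx p hp
            · rcases hp with rfl; exact heq
        · intro x hx
          obtain ⟨Z, hZ, hxZ⟩ := Set.mem_sUnion.1 hx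
          simp only [hs, Finset.coe_image, Set.mem_image] at hZ
          obtain ⟨p, -, rfl⟩ := hZ
          exact solSet_antitone Set.subset_union_left hxZ
    refine ⟨(evalHom hx).comp e.toHom, ?_⟩
    intro a ha b hb hab
    by_contra hne
    have heab : e a ≠ e b := fun h => hne (e.toEquiv.injective h)
    exact hsep a ha b hb heab hab
  · intro hdis
    -- get a finite generating family
    obtain ⟨n, c, hc⟩ :=
      Substructure.fg_iff_exists_fin_generating_family.1 (Structure.fg_def.1 hfg)
    have hsurj : ∀ a : C, ∃ t : L.Term (Fin n), t.realize c = a := by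
      intro a
      have ha : a ∈ Substructure.closure L (Set.range c) := hc ▸ Substructure.mem_top a
      obtain ⟨t, ht⟩ := Substructure.mem_closure_iff_exists_term.1 ha
      refine ⟨t.relabel (fun y => Classical.choose y.2), ?_⟩
      rw [Term.realize_relabel, ← ht]
      congr 1
      funext y
      exact Classical.choose_spec y.2
    set S : Set (L.Term (Fin n) × L.Term (Fin n)) :=
      {p | p.1.realize c = p.2.realize c} with hS
    -- any hom lands in the solution set
    have hsol : ∀ h : C →[L] B, (h ∘ c) ∈ solSet B S := by
      intro h p hp
      simp only [HomClass.realize_term]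
      exact congrArg h hp
    -- the radical of S is S
    have hrad : radRel B S = S := by
      apply Set.Subset.antisymm
      · intro p hp
        by_contra hpS
        obtain ⟨h, hinj⟩ := hdis {p.1.realize c, p.2.realize c}
        have hne : h (p.1.realize c) ≠ h (p.2.realize c) := by
          intro heq
          exact hpS (hinj (by simp) (by simp) heq)
        have := hp (h ∘ c) (hsol h)
        simp only [HomClass.realize_term] at this
        exact hne this
      · intro p hp x hx
        exact hx p hp
    have hrel : ∀ t₁ t₂ : L.Term (Fin n),
        (radSetoid B S) t₁ t₂ ↔ t₁.realize c = t₂.realize c := by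
      intro t₁ t₂
      constructor
      · intro h
        have : (t₁, t₂) ∈ radRel B S := h
        rw [hrad] at this
        exact this
      · intro h
        show (t₁, t₂) ∈ radRel B S
        rw [hrad]; exact h
    refine ⟨n, S, ?_, ?_⟩
    · -- irreducibility
      refine ⟨⟨S, rfl⟩, ?_⟩
      intro s hs heq
      -- choose a witness pair for each proper algebraic subset
      have hwit : ∀ Z ∈ s, ∃ p : L.Term (Fin n) × L.Term (Fin n),
          p.1.realize c ≠ p.2.realize c ∧ ∀ x ∈ Z, p.1.realize x = p.2.realize x := by
        intro Z hZ
        obtain ⟨⟨SZ, rfl⟩, hZsub⟩ := hs Z hZ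
        by_contra hnone
        push_neg at hnone
        have hSZS : SZ ⊆ S := by
          intro p hp
          by_contra hpS
          have := hnone p (fun heq => hpS heq)
          obtain ⟨x, hxZ, hne⟩ := this
          exact hne (hxZ p hp)
        exact hZsub.2 (solSet_antitone hSZS)
      choose pz hpz1 hpz2 using hwit
      set W : Finset C :=
        s.attach.biUnion
          (fun z => {(pz z.1 z.2).1.realize c, (pz z.1 z.2).2.realize c}) with hW
      obtain ⟨h, hinj⟩ := hdis W
      have hxY : (h ∘ c) ∈ solSet B S := hsol h
      rw [heq] at hxY
      obtain ⟨Z, hZ, hxZ⟩ := Set.mem_sUnion.1 hxY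
      have hZs : Z ∈ s := by exact_mod_cast hZ
      have h1 : (pz Z hZs).1.realize (h ∘ c) = (pz Z hZs).2.realize (h ∘ c) :=
        hpz2 Z hZs _ hxZ
      simp only [HomClass.realize_term] at h1
      have hm1 : (pz Z hZs).1.realize c ∈ (W : Set C) := by
        simp only [hW, Finset.coe_biUnion, Set.mem_iUnion]
        exact ⟨⟨Z, hZs⟩, Finset.mem_attach _ _, by simp⟩
      have hm2 : (pz Z hZs).2.realize c ∈ (W : Set C) := by
        simp only [hW, Finset.coe_biUnion, Set.mem_iUnion]
        exact ⟨⟨Z, hZs⟩, Finset.mem_attach _ _, by simp⟩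
      exact hpz1 Z hZs (hinj hm1 hm2 h1)
    · -- the coordinate algebra is isomorphic to C
      letI := coordStructure B S
      refine ⟨?_⟩
      have hwd : ∀ t₁ t₂ : L.Term (Fin n), (radSetoid B S) t₁ t₂ →
          t₁.realize c = t₂.realize c := fun t₁ t₂ h => (hrel t₁ t₂).1 h
      set f : Quotient (radSetoid B S) → C :=
        Quotient.lift (fun t => t.realize c) hwd with hf
      have hfmk : ∀ t : L.Term (Fin n), f (Quotient.mk (radSetoid B S) t) = t.realize c :=
        fun t => rfl
      have hfbij : Function.Bijective f := by
        constructor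
        · intro q₁ q₂ hq
          induction q₁ using Quotient.inductionOn
          induction q₂ using Quotient.inductionOn
          exact Quotient.sound ((hrel _ _).2 hq)
        · intro a
          obtain ⟨t, ht⟩ := hsurj a
          exact ⟨Quotient.mk (radSetoid B S) t, ht⟩
      have hfhom : ∀ {k} (g : L.Functions k) (v : Fin k → Quotient (radSetoid B S)),
          f (funMap g v) = funMap g (f ∘ v) := by
        intro k g v
        show f (Quotient.mk (radSetoid B S) (Term.func g fun i => (v i).out)) = _
        rw [hfmk]
        simp only [Term.realize]
        congr 1
        funext i
        calc (v i).out.realize c = f (Quotient.mk (radSetoid B S) (v i).out) := rfl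
          _ = f (v i) := by rw [Quotient.out_eq]
      set e : C ≃ Quotient (radSetoid B S) := (Equiv.ofBijective f hfbij).symm with he
      have hfe : ∀ a : C, f (e a) = a := fun a => (Equiv.ofBijective f hfbij).apply_symm_apply a
      refine ⟨e, ?_, ?_⟩
      · intro k g v
        apply hfbij.1
        rw [hfhom]
        show f (e _) = funMap g (fun i => f (e (v i)))
        rw [hfe]
        congr 1
        funext i
        rw [hfe]
      · intro k r
        exact isEmptyElim r

end UAG
end
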